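/- Let d ≥ 1 with γ_d > 0 and let θ > 0. Then Σ_{x∈ℤ^d} Σ_{y∈ℤ^d} g_θ(x) g_θ(y) Φ(y − x) = γ_d ∫_0^∞ ∫_0^∞ ∫_0^∞ e^{−θ(r+s)} p_{r+s+u}(O,O) dr ds du, as an identity in [0,∞]. -/

import Mathlib

open MeasureTheory ENNReal Filter Set Topology

noncomputable section

/-- `n`-step transition probabilities of the discrete-time simple random walk on `ℤ^d`:
`q 0 x y = 1_{x = y}` and `q (n+1) x y = (1/(2d)) ∑_{z ∼ y} q n x z`, where the `2d`
neighbors of `y` are the points `y ± e i` for the unit vectors `e i`. -/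
def srwQ (d : ℕ) : ℕ → (Fin d → ℤ) → (Fin d → ℤ) → ℝ
  | 0, x, y => if x = y then 1 else 0
  | n + 1, x, y => (1 / (2 * (d : ℝ))) * ∑ i : Fin d,
      (srwQ d n x (y + Pi.single i 1) + srwQ d n x (y - Pi.single i 1))

/-- Transition probabilities of the continuous-time simple random walk with jump rate 1:
`p t x y = e^{-t} ∑_n (t^n/n!) q_n(x,y)`. -/
def srwP (d : ℕ) (t : ℝ) (x y : Fin d → ℤ) : ℝ :=
  Real.exp (-t) * ∑' n : ℕ, t ^ n / (n.factorial : ℝ) * srwQ d n x y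

/-- The uniform step distribution on the `2d` unit vectors `± e i` of `ℤ^d`. -/
def stepMeasure (d : ℕ) : Measure (Fin d → ℤ) :=
  (2 * (d : ℝ≥0∞))⁻¹ • ∑ i : Fin d,
    (Measure.dirac (Pi.single i 1) + Measure.dirac (Pi.single i (-1)))

/-- `P` is the infinite product measure `μ^⊗ℕ` of the uniform step distribution `μ` over `ℕ`:
a probability measure giving every measurable cylinder set its product probability. -/
def IsStepProduct (d : ℕ) (P : Measure (ℕ → (Fin d → ℤ))) : Prop :=
  IsProbabilityMeasure P ∧
    ∀ (I : Finset ℕ) (s : ℕ → Set (Fin d → ℤ)), (∀ i ∈ I, MeasurableSet (s i)) →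
      P {ω | ∀ i ∈ I, ω i ∈ s i} = ∏ i ∈ I, stepMeasure d (s i)

/-- The simple random walk: `S_0 = O` and `S_n = ω_1 + ⋯ + ω_n` for the step sequence `ω`. -/
def walk (d : ℕ) (n : ℕ) (ω : ℕ → (Fin d → ℤ)) : Fin d → ℤ :=
  ∑ k ∈ Finset.range n, ω k

/-- The escape probability `γ_d = P(S_n ≠ O for all n ≥ 1)`. -/
def escapeProb (d : ℕ) (P : Measure (ℕ → (Fin d → ℤ))) : ℝ≥0∞ :=
  P {ω | ∀ n, 1 ≤ n → walk d n ω ≠ 0}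

/-- The hitting probability `Φ(x) = P(S_n = x for some n ≥ 0)`. -/
def hitProb (d : ℕ) (P : Measure (ℕ → (Fin d → ℤ))) (x : Fin d → ℤ) : ℝ≥0∞ :=
  P {ω | ∃ n, walk d n ω = x}

/-- The srwResolvent `g_θ(x) = ∫_0^∞ e^{-θu} p_u(O,x) du` of the continuous-time simple random
walk, with values in `[0,∞]`; `srwResolvent d 0` is the Green function `g_0`. -/
def srwResolvent (d : ℕ) (θ : ℝ) (x : Fin d → ℤ) : ℝ≥0∞ :=
  ∫⁻ u in Set.Ioi (0 : ℝ), ENNReal.ofReal (Real.exp (-θ * u) * srwP d u 0 x)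


namespace SRW

variable {d : ℕ}

lemma srwQ_nonneg (d n : ℕ) (x y : Fin d → ℤ) : 0 ≤ srwQ d n x y := by
  induction n generalizing y with
  | zero => simp only [srwQ]; split <;> norm_num
  | succ n ih =>
    simp only [srwQ]
    apply mul_nonneg (by positivity)
    exact Finset.sum_nonneg fun i _ => add_nonneg (ih _) (ih _)

lemma srwQ_le_one (d n : ℕ) (x y : Fin d → ℤ) : srwQ d n x y ≤ 1 := by
  induction n generalizing y with
  | zero => simp only [srwQ]; split <;> norm_num
  | succ n ih =>
    simp only [srwQ]
    rcases Nat.eq_zero_or_pos d with hd | hd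
    · subst hd; simp
    have h2 : (0:ℝ) < 2 * d := by positivity
    calc (1 / (2 * (d:ℝ))) * ∑ i : Fin d,
          (srwQ d n x (y + Pi.single i 1) + srwQ d n x (y - Pi.single i 1))
        ≤ (1 / (2 * (d:ℝ))) * ∑ _i : Fin d, 2 := by
          apply mul_le_mul_of_nonneg_left _ (by positivity)
          exact Finset.sum_le_sum fun i _ => by
            have := ih (y + Pi.single i 1); have := ih (y - Pi.single i 1); linarith
      _ = 1 := by
          simp only [Finset.sum_const, Finset.card_univ, Fintype.card_fin, nsmul_eq_mul]
          field_simp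

lemma srwQ_translate (d n : ℕ) (x y : Fin d → ℤ) : srwQ d n x y = srwQ d n 0 (y - x) := by
  induction n generalizing y with
  | zero =>
    simp only [srwQ]
    congr 1
    simp [sub_eq_zero, eq_comm]
  | succ n ih =>
    simp only [srwQ]
    congr 1
    refine Finset.sum_congr rfl fun i _ => ?_
    rw [ih (y + Pi.single i 1), ih (y - Pi.single i 1)]
    congr 2 <;> abel

lemma srwQ_neg (d n : ℕ) (x : Fin d → ℤ) : srwQ d n 0 x = srwQ d n 0 (-x) := by
  induction n generalizing x with
  | zero =>
    simp only [srwQ]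
    congr 1
    simp only [eq_comm (a := (0 : Fin d → ℤ)), neg_eq_zero]
  | succ n ih =>
    simp only [srwQ]
    congr 1
    refine Finset.sum_congr rfl fun (i : Fin d) _ => ?_
    rw [add_comm (srwQ d n 0 (x + Pi.single i 1))]
    congr 1
    · rw [ih (x - Pi.single i 1)]; congr 1; abel
    · rw [ih (x + Pi.single i 1)]; congr 1; abel

lemma srwQ_symm (d n : ℕ) (x y : Fin d → ℤ) : srwQ d n x y = srwQ d n y x := by
  rw [srwQ_translate d n x y, srwQ_translate d n y x, srwQ_neg, neg_sub]

/-- `srwQ` in `ℝ≥0∞`. -/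
def Qe (d n : ℕ) (x y : Fin d → ℤ) : ℝ≥0∞ := ENNReal.ofReal (srwQ d n x y)

lemma Qe_zero (x y : Fin d → ℤ) : Qe d 0 x y = if x = y then 1 else 0 := by
  simp only [Qe, srwQ]; split <;> simp

lemma Qe_translate (n : ℕ) (x y : Fin d → ℤ) : Qe d n x y = Qe d n 0 (y - x) := by
  rw [Qe, Qe, srwQ_translate]

lemma Qe_neg (n : ℕ) (x : Fin d → ℤ) : Qe d n 0 x = Qe d n 0 (-x) := by
  rw [Qe, Qe, ← srwQ_neg]

lemma Qe_symm (n : ℕ) (x y : Fin d → ℤ) : Qe d n x y = Qe d n y x := by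
  rw [Qe, Qe, srwQ_symm]

lemma Qe_le_one (n : ℕ) (x y : Fin d → ℤ) : Qe d n x y ≤ 1 := by
  rw [Qe, ← ENNReal.ofReal_one]
  exact ENNReal.ofReal_le_ofReal (srwQ_le_one d n x y)

lemma Qe_ne_top (n : ℕ) (x y : Fin d → ℤ) : Qe d n x y ≠ ∞ := ENNReal.ofReal_ne_top

lemma Qe_succ (hd : 1 ≤ d) (n : ℕ) (x y : Fin d → ℤ) :
    Qe d (n+1) x y = (2 * d : ℝ≥0∞)⁻¹ * ∑ i : Fin d,
      (Qe d n x (y + Pi.single i 1) + Qe d n x (y - Pi.single i 1)) := by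
  have hd0 : (0:ℝ) < 2 * d := by positivity
  simp only [Qe, srwQ]
  rw [ENNReal.ofReal_mul (by positivity),
    ofReal_sum_of_nonneg (fun i _ => add_nonneg (srwQ_nonneg d n x _) (srwQ_nonneg d n x _))]
  congr 1
  · rw [one_div, ENNReal.ofReal_inv_of_pos hd0]
    congr 1
    rw [ENNReal.ofReal_mul (by norm_num)]
    simp [ENNReal.ofReal_ofNat, ENNReal.ofReal_natCast]
  · exact Finset.sum_congr rfl fun i _ =>
      ENNReal.ofReal_add (srwQ_nonneg d n x _) (srwQ_nonneg d n x _)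

lemma Qe_ck (hd : 1 ≤ d) (m n : ℕ) (x y : Fin d → ℤ) :
    ∑' z : Fin d → ℤ, Qe d m x z * Qe d n z y = Qe d (m + n) x y := by
  induction n generalizing y with
  | zero =>
    rw [Nat.add_zero]
    rw [tsum_eq_single y]
    · rw [Qe_zero, if_pos rfl, mul_one]
    · intro z hz
      rw [Qe_zero, if_neg hz, mul_zero]
  | succ n ih =>
    have : ∀ z : Fin d → ℤ, Qe d m x z * Qe d (n+1) z y
        = (2 * d : ℝ≥0∞)⁻¹ * ∑ i : Fin d,
          (Qe d m x z * Qe d n z (y + Pi.single i 1) + Qe d m x z * Qe d n z (y - Pi.single i 1)) := by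
      intro z
      rw [Qe_succ hd, ← mul_assoc, mul_comm (Qe d m x z), mul_assoc, Finset.mul_sum]
      congr 1
      exact Finset.sum_congr rfl fun i _ => mul_add _ _ _
    rw [tsum_congr this, ENNReal.tsum_mul_left,
      Summable.tsum_finsetSum (fun i _ => ENNReal.summable)]
    rw [Finset.sum_congr rfl fun (i : Fin d) _ =>
      (Summable.tsum_add ENNReal.summable ENNReal.summable)]
    rw [Finset.sum_congr rfl fun (i : Fin d) _ => by rw [ih (y + Pi.single i 1), ih (y - Pi.single i 1)]]
    rw [← Qe_succ hd (m+n) x y]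
    rfl

end SRW

namespace SRW

variable {d : ℕ}

/-- The regrouping of a double `ℝ≥0∞` series along antidiagonals. -/
lemma tsum_antidiag (F : ℕ → ℕ → ℝ≥0∞) :
    (∑' m : ℕ, ∑' n : ℕ, F m n) = ∑' N : ℕ, ∑ kl ∈ Finset.HasAntidiagonal.antidiagonal N, F kl.1 kl.2 := by
  rw [← ENNReal.tsum_prod, ← Finset.HasAntidiagonal.sigmaAntidiagonalEquivProd.tsum_eq
    (fun p : ℕ × ℕ => F p.1 p.2)]
  rw [ENNReal.tsum_sigma' (fun c : Σ n : ℕ, Finset.HasAntidiagonal.antidiagonal n =>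
    F (Finset.HasAntidiagonal.sigmaAntidiagonalEquivProd c).1 (Finset.HasAntidiagonal.sigmaAntidiagonalEquivProd c).2)]
  exact tsum_congr fun N => Finset.tsum_subtype (Finset.HasAntidiagonal.antidiagonal N)
    (fun kl : ℕ × ℕ => F kl.1 kl.2)

/-- `srwP` in `ℝ≥0∞`. -/
def Pe (d : ℕ) (t : ℝ) (x y : Fin d → ℤ) : ℝ≥0∞ :=
  ENNReal.ofReal (Real.exp (-t)) * ∑' n : ℕ,
    ENNReal.ofReal (t ^ n / (n.factorial : ℝ)) * Qe d n x y

lemma ofReal_srwP (t : ℝ) (ht : 0 ≤ t) (x y : Fin d → ℤ) :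
    ENNReal.ofReal (srwP d t x y) = Pe d t x y := by
  rw [srwP, Pe, ENNReal.ofReal_mul (Real.exp_nonneg _)]
  congr 1
  rw [ENNReal.ofReal_tsum_of_nonneg]
  · exact tsum_congr fun n => ENNReal.ofReal_mul (by positivity)
  · exact fun n => mul_nonneg (by positivity) (srwQ_nonneg d n x y)
  · apply Summable.of_nonneg_of_le (fun n => mul_nonneg (by positivity) (srwQ_nonneg d n x y))
      (fun n => ?_) (Real.summable_pow_div_factorial t)
    calc t ^ n / (n.factorial : ℝ) * srwQ d n x y
        ≤ t ^ n / (n.factorial : ℝ) * 1 :=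
          mul_le_mul_of_nonneg_left (srwQ_le_one d n x y) (by positivity)
      _ = t ^ n / (n.factorial : ℝ) := mul_one _

lemma Pe_translate (t : ℝ) (x y : Fin d → ℤ) : Pe d t x y = Pe d t 0 (y - x) := by
  simp only [Pe]
  congr 1
  exact tsum_congr fun n => by rw [Qe_translate]

lemma Pe_symm (t : ℝ) (x y : Fin d → ℤ) : Pe d t x y = Pe d t y x := by
  simp only [Pe]
  congr 1
  exact tsum_congr fun n => by rw [Qe_symm]

lemma Pe_semigroup (hd : 1 ≤ d) {s t : ℝ} (hs : 0 ≤ s) (ht : 0 ≤ t) (x y : Fin d → ℤ) :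
    ∑' z : Fin d → ℤ, Pe d s x z * Pe d t z y = Pe d (s + t) x y := by
  have key : ∀ z, Pe d s x z * Pe d t z y
      = (ENNReal.ofReal (Real.exp (-s)) * ENNReal.ofReal (Real.exp (-t))) *
        ∑' m : ℕ, ∑' n : ℕ, (ENNReal.ofReal (s ^ m / (m.factorial : ℝ)) *
          ENNReal.ofReal (t ^ n / (n.factorial : ℝ))) * (Qe d m x z * Qe d n z y) := by
    intro z
    rw [Pe, Pe]
    rw [mul_mul_mul_comm]
    congr 1
    rw [← ENNReal.tsum_mul_right]
    refine tsum_congr fun m => ?_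
    rw [← ENNReal.tsum_mul_left]
    exact tsum_congr fun n => by ring
  rw [tsum_congr key, ENNReal.tsum_mul_left]
  have swap : (∑' z : Fin d → ℤ, ∑' m : ℕ, ∑' n : ℕ,
      (ENNReal.ofReal (s ^ m / (m.factorial : ℝ)) * ENNReal.ofReal (t ^ n / (n.factorial : ℝ))) *
        (Qe d m x z * Qe d n z y))
      = ∑' m : ℕ, ∑' n : ℕ, (ENNReal.ofReal (s ^ m / (m.factorial : ℝ)) *
          ENNReal.ofReal (t ^ n / (n.factorial : ℝ))) * Qe d (m + n) x y := by
    rw [ENNReal.tsum_comm]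
    refine tsum_congr fun m => ?_
    rw [ENNReal.tsum_comm]
    refine tsum_congr fun n => ?_
    rw [ENNReal.tsum_mul_left, Qe_ck hd]
  rw [swap]
  rw [tsum_antidiag (fun m n => (ENNReal.ofReal (s ^ m / (m.factorial : ℝ)) *
      ENNReal.ofReal (t ^ n / (n.factorial : ℝ))) * Qe d (m + n) x y)]
  rw [Pe, ← ENNReal.ofReal_mul (Real.exp_nonneg _), ← Real.exp_add]
  have : -s + -t = -(s+t) := by ring
  rw [this]
  congr 1
  refine tsum_congr fun N => ?_
  have hsum : ∀ kl ∈ Finset.HasAntidiagonal.antidiagonal N, Qe d (kl.1 + kl.2) x y = Qe d N x y := by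
    intro kl hkl
    rw [Finset.HasAntidiagonal.mem_antidiagonal.mp hkl]
  have hbin : (∑ kl ∈ Finset.HasAntidiagonal.antidiagonal N, ENNReal.ofReal (s ^ kl.1 / (kl.1.factorial : ℝ)) *
      ENNReal.ofReal (t ^ kl.2 / (kl.2.factorial : ℝ)))
      = ENNReal.ofReal ((s + t) ^ N / (N.factorial : ℝ)) := by
    calc (∑ kl ∈ Finset.HasAntidiagonal.antidiagonal N, ENNReal.ofReal (s ^ kl.1 / (kl.1.factorial : ℝ)) *
        ENNReal.ofReal (t ^ kl.2 / (kl.2.factorial : ℝ)))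
        = ∑ kl ∈ Finset.HasAntidiagonal.antidiagonal N,
            ENNReal.ofReal (s ^ kl.1 / (kl.1.factorial : ℝ) * (t ^ kl.2 / (kl.2.factorial : ℝ))) :=
          Finset.sum_congr rfl fun kl _ => (ENNReal.ofReal_mul (by positivity)).symm
      _ = ENNReal.ofReal (∑ kl ∈ Finset.HasAntidiagonal.antidiagonal N,
            s ^ kl.1 / (kl.1.factorial : ℝ) * (t ^ kl.2 / (kl.2.factorial : ℝ))) :=
          (ofReal_sum_of_nonneg (fun kl _ => by positivity)).symm
      _ = ENNReal.ofReal ((s + t) ^ N / (N.factorial : ℝ)) := by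
          congr 1
          rw [Finset.Nat.sum_antidiagonal_eq_sum_range_succ
            (fun k l => s ^ k / (k.factorial : ℝ) * (t ^ l / (l.factorial : ℝ)))]
          rw [add_pow, Finset.sum_div]
          refine Finset.sum_congr rfl fun k hk => ?_
          have hkN : k ≤ N := Nat.lt_succ_iff.mp (Finset.mem_range.mp hk)
          rw [Nat.choose_eq_factorial_div_factorial hkN]
          rw [Nat.cast_div (Nat.factorial_mul_factorial_dvd_factorial hkN)
            (by positivity)]
          field_simp
          push_cast
          ring
  calc ∑ kl ∈ Finset.HasAntidiagonal.antidiagonal N, (ENNReal.ofReal (s ^ kl.1 / (kl.1.factorial : ℝ)) *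
          ENNReal.ofReal (t ^ kl.2 / (kl.2.factorial : ℝ))) * Qe d (kl.1 + kl.2) x y
      = (∑ kl ∈ Finset.HasAntidiagonal.antidiagonal N, ENNReal.ofReal (s ^ kl.1 / (kl.1.factorial : ℝ)) *
          ENNReal.ofReal (t ^ kl.2 / (kl.2.factorial : ℝ))) * Qe d N x y := by
        rw [Finset.sum_mul]
        exact Finset.sum_congr rfl fun kl hkl => by rw [hsum kl hkl]
    _ = ENNReal.ofReal ((s + t) ^ N / (N.factorial : ℝ)) * Qe d N x y := by rw [hbin]

end SRW

namespace SRW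

variable {d : ℕ}

lemma measurable_Pe (x y : Fin d → ℤ) : Measurable fun t : ℝ => Pe d t x y := by
  apply Measurable.mul
  · fun_prop
  · apply Measurable.ennreal_tsum
    intro n
    apply Measurable.mul_const
    fun_prop

/-- The (discrete-time) Green function in `ℝ≥0∞`. -/
def Ge (d : ℕ) (x : Fin d → ℤ) : ℝ≥0∞ := ∑' n : ℕ, Qe d n 0 x

lemma lintegral_exp_monomial (n : ℕ) :
    (∫⁻ u in Set.Ioi (0:ℝ), ENNReal.ofReal (Real.exp (-u)) *
      ENNReal.ofReal (u ^ n / (n.factorial : ℝ))) = 1 := by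
  have hint : IntegrableOn (fun x : ℝ => Real.exp (-x) * x ^ n) (Set.Ioi 0) := by
    have h := Real.GammaIntegral_convergent (s := (n:ℝ) + 1) (by positivity)
    apply h.congr_fun _ measurableSet_Ioi
    intro x _
    simp [Real.rpow_natCast]
  have hval : (∫ x in Set.Ioi (0:ℝ), Real.exp (-x) * x ^ n) = (n.factorial : ℝ) := by
    have : (∫ x in Set.Ioi (0:ℝ), Real.exp (-x) * x ^ n) = Real.Gamma ((n:ℝ) + 1) := by
      rw [Real.Gamma_eq_integral (by positivity)]
      refine setIntegral_congr_fun measurableSet_Ioi fun x _ => ?_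
      rw [add_sub_cancel_right, Real.rpow_natCast]
    rw [this, Real.Gamma_nat_eq_factorial]
  have h1 : (∫⁻ u in Set.Ioi (0:ℝ), ENNReal.ofReal (Real.exp (-u) * u ^ n))
      = ENNReal.ofReal (n.factorial : ℝ) := by
    rw [← ofReal_integral_eq_lintegral_ofReal hint
      ((ae_restrict_iff' measurableSet_Ioi).mpr (ae_of_all _ fun x hx =>
        mul_nonneg (Real.exp_nonneg _) (pow_nonneg (le_of_lt hx) n))), hval]
  have h2 : ∀ u ∈ Set.Ioi (0:ℝ),
      ENNReal.ofReal (Real.exp (-u)) * ENNReal.ofReal (u ^ n / (n.factorial : ℝ))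
      = ENNReal.ofReal (Real.exp (-u) * u ^ n) * ENNReal.ofReal (1 / (n.factorial : ℝ)) := by
    intro u hu
    have hu' : (0:ℝ) < u := hu
    rw [← ENNReal.ofReal_mul (Real.exp_nonneg _),
      ← ENNReal.ofReal_mul (mul_nonneg (Real.exp_nonneg _) (pow_nonneg hu'.le n))]
    congr 1
    ring
  rw [setLIntegral_congr_fun measurableSet_Ioi h2]
  rw [lintegral_mul_const _ (show Measurable fun u : ℝ =>
      ENNReal.ofReal (Real.exp (-u) * u ^ n) by fun_prop), h1,
    ← ENNReal.ofReal_mul (by positivity)]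
  rw [mul_one_div, div_self (by exact_mod_cast n.factorial_ne_zero), ENNReal.ofReal_one]

lemma lintegral_Pe_green (x : Fin d → ℤ) :
    (∫⁻ u in Set.Ioi (0:ℝ), Pe d u 0 x) = Ge d x := by
  have : ∀ u : ℝ, Pe d u 0 x = ∑' n : ℕ, (ENNReal.ofReal (Real.exp (-u)) *
      ENNReal.ofReal (u ^ n / (n.factorial : ℝ))) * Qe d n 0 x := by
    intro u
    rw [Pe, ← ENNReal.tsum_mul_left]
    exact tsum_congr fun n => by ring
  rw [lintegral_congr this, lintegral_tsum]
  · refine tsum_congr fun n => ?_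
    rw [lintegral_mul_const _ (show Measurable fun u : ℝ =>
        ENNReal.ofReal (Real.exp (-u)) * ENNReal.ofReal (u ^ n / (n.factorial : ℝ)) by fun_prop),
      lintegral_exp_monomial n, one_mul]
  · intro n
    apply Measurable.aemeasurable
    apply Measurable.mul_const
    fun_prop

lemma resolvent_eq (θ : ℝ) (x : Fin d → ℤ) :
    srwResolvent d θ x = ∫⁻ u in Set.Ioi (0:ℝ),
      ENNReal.ofReal (Real.exp (-θ * u)) * Pe d u 0 x := by
  rw [srwResolvent]
  refine setLIntegral_congr_fun measurableSet_Ioi (fun u hu => ?_)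
  rw [ENNReal.ofReal_mul (Real.exp_nonneg _), ofReal_srwP u (le_of_lt hu)]

end SRW

namespace SRW

open scoped Classical

variable {d : ℕ} {P : Measure (ℕ → Fin d → ℤ)}

lemma measurableSet_V (s : Set (Fin d → ℤ)) : MeasurableSet s :=
  s.to_countable.measurableSet

lemma measurable_walk (n : ℕ) : Measurable (walk d n) :=
  Finset.measurable_sum _ (fun k _ => measurable_pi_apply k)

lemma measurableSet_walkEq (n : ℕ) (x : Fin d → ℤ) :
    MeasurableSet {ω : ℕ → Fin d → ℤ | walk d n ω = x} :=
  measurable_walk n (measurableSet_singleton x)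

lemma walk_congr {n : ℕ} {ω ω' : ℕ → Fin d → ℤ} (h : ∀ i < n, ω i = ω' i) :
    walk d n ω = walk d n ω' :=
  Finset.sum_congr rfl fun k hk => h k (Finset.mem_range.mp hk)

/-- Shift of a step sequence. -/
def shiftSeq (n : ℕ) (ω : ℕ → Fin d → ℤ) : ℕ → Fin d → ℤ := fun i => ω (n + i)

lemma walk_add (k m : ℕ) (ω : ℕ → Fin d → ℤ) :
    walk d (k + m) ω = walk d k ω + walk d m (shiftSeq k ω) := by
  simp only [walk, shiftSeq]
  exact Finset.sum_range_add (fun i => ω i) k m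

/-- An event determined by the first `n` coordinates. -/
def DetBy (A : Set (ℕ → Fin d → ℤ)) (n : ℕ) : Prop :=
  ∀ ω ω', (∀ i < n, ω i = ω' i) → ω ∈ A → ω' ∈ A

lemma detBy_walkEq (n : ℕ) (x : Fin d → ℤ) :
    DetBy {ω : ℕ → Fin d → ℤ | walk d n ω = x} n :=
  fun ω ω' h hω => by rwa [Set.mem_setOf_eq, ← walk_congr h]

/-- Extension of a finite tuple by zero. -/
def extSeq (n : ℕ) (v : Fin n → Fin d → ℤ) : ℕ → Fin d → ℤ :=
  fun i => if h : i < n then v ⟨i, h⟩ else 0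

lemma extSeq_lt {n : ℕ} (v : Fin n → Fin d → ℤ) {i : ℕ} (h : i < n) :
    extSeq n v i = v ⟨i, h⟩ := dif_pos h

lemma measurableSet_cyl (n : ℕ) (v : ℕ → Fin d → ℤ) :
    MeasurableSet {ω : ℕ → Fin d → ℤ | ∀ i < n, ω i = v i} := by
  have : {ω : ℕ → Fin d → ℤ | ∀ i < n, ω i = v i}
      = ⋂ (i : ℕ) (_ : i < n), (fun ω : ℕ → Fin d → ℤ => ω i) ⁻¹' {v i} := by
    ext ω; simp
  rw [this]
  exact MeasurableSet.iInter fun i => MeasurableSet.iInter fun _ =>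
    (measurable_pi_apply i) (measurableSet_singleton _)

lemma P_cylN (hP : IsStepProduct d P) (n : ℕ) (v : ℕ → Fin d → ℤ) :
    P {ω | ∀ i < n, ω i = v i} = ∏ i ∈ Finset.range n, stepMeasure d {v i} := by
  have hset : {ω : ℕ → Fin d → ℤ | ∀ i < n, ω i = v i}
      = {ω | ∀ i ∈ Finset.range n, ω i ∈ ({v i} : Set (Fin d → ℤ))} := by
    ext ω; simp [Finset.mem_range]
  rw [hset, hP.2 (Finset.range n) (fun i => {v i}) (fun i _ => measurableSet_V _)]

lemma step_singleton (hd : 1 ≤ d) (w : Fin d → ℤ) : stepMeasure d {w} = Qe d 1 0 w := by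
  have hsingle_neg : ∀ i : Fin d, (Pi.single i (-1 : ℤ) : Fin d → ℤ) = -(Pi.single i (1:ℤ)) := by
    intro i; funext j
    by_cases h : j = i
    · subst h; simp
    · simp [Pi.single_apply, h]
  rw [show Qe d 1 0 w = Qe d (0+1) 0 w from rfl, Qe_succ hd 0 0 w]
  rw [stepMeasure, Measure.smul_apply, Measure.finset_sum_apply, smul_eq_mul]
  congr 1
  refine Finset.sum_congr rfl fun i _ => ?_
  rw [Measure.add_apply, Measure.dirac_apply, Measure.dirac_apply, Qe_zero, Qe_zero, add_comm]
  congr 1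
  · simp only [Set.indicator_apply, Set.mem_singleton_iff, Pi.one_apply]
    refine if_congr ?_ rfl rfl
    rw [hsingle_neg i]
    constructor
    · intro h; rw [← h]; abel
    · intro h; exact (eq_neg_of_add_eq_zero_left h.symm).symm
  · simp only [Set.indicator_apply, Set.mem_singleton_iff, Pi.one_apply]
    refine if_congr ?_ rfl rfl
    constructor
    · intro h; rw [h]; abel
    · intro h; exact (sub_eq_zero.mp h.symm).symm

lemma P_det (hP : IsStepProduct d P) {A : Set (ℕ → Fin d → ℤ)} {n : ℕ} (hA : DetBy A n) :
    P A = ∑' v : Fin n → Fin d → ℤ,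
      Set.indicator {v : Fin n → Fin d → ℤ | extSeq n v ∈ A}
        (fun v => ∏ i : Fin n, stepMeasure d {v i}) v := by
  classical
  have hAeq : A = ⋃ v : Fin n → Fin d → ℤ,
      if extSeq n v ∈ A then {ω | ∀ i < n, ω i = extSeq n v i} else ∅ := by
    ext ω
    simp only [Set.mem_iUnion]
    constructor
    · intro hω
      refine ⟨fun i => ω (i : ℕ), ?_⟩
      have hin : extSeq n (fun i : Fin n => ω (i : ℕ)) ∈ A :=
        hA ω _ (fun i hi => by rw [extSeq_lt _ hi]) hω
      rw [if_pos hin]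
      exact fun i hi => by rw [extSeq_lt _ hi]
    · rintro ⟨v, hv⟩
      by_cases h : extSeq n v ∈ A
      · rw [if_pos h] at hv
        exact hA (extSeq n v) ω (fun i hi => (hv i hi).symm) h
      · rw [if_neg h] at hv; exact absurd hv (Set.notMem_empty ω)
  have hdisj : Pairwise (Function.onFun Disjoint (fun v : Fin n → Fin d → ℤ =>
      if extSeq n v ∈ A then {ω : ℕ → Fin d → ℤ | ∀ i < n, ω i = extSeq n v i} else ∅)) := by
    intro v v' hvv'
    have hd0 : Disjoint {ω : ℕ → Fin d → ℤ | ∀ i < n, ω i = extSeq n v i}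
        {ω : ℕ → Fin d → ℤ | ∀ i < n, ω i = extSeq n v' i} := by
      rw [Set.disjoint_left]
      intro ω h1 h2
      apply hvv'
      funext i
      have h3 := (h1 i i.isLt).symm.trans (h2 i i.isLt)
      rw [extSeq_lt v i.isLt, extSeq_lt v' i.isLt] at h3
      simpa using h3
    have hsub : ∀ v'' : Fin n → Fin d → ℤ,
        (if extSeq n v'' ∈ A then {ω : ℕ → Fin d → ℤ | ∀ i < n, ω i = extSeq n v'' i} else ∅)
          ⊆ {ω : ℕ → Fin d → ℤ | ∀ i < n, ω i = extSeq n v'' i} := by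
      intro v''; split
      · exact subset_rfl
      · exact Set.empty_subset _
    exact Disjoint.mono (hsub v) (hsub v') hd0
  have hmeas : ∀ v : Fin n → Fin d → ℤ, MeasurableSet
      (if extSeq n v ∈ A then {ω : ℕ → Fin d → ℤ | ∀ i < n, ω i = extSeq n v i} else ∅) := by
    intro v; split
    · exact measurableSet_cyl n _
    · exact MeasurableSet.empty
  conv_lhs => rw [hAeq]
  rw [measure_iUnion hdisj hmeas]
  refine tsum_congr fun v => ?_
  by_cases h : extSeq n v ∈ A
  · rw [if_pos h, Set.indicator_of_mem (show v ∈ {v : Fin n → Fin d → ℤ | extSeq n v ∈ A} from h),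
      P_cylN hP]
    rw [← Fin.prod_univ_eq_prod_range (fun i => stepMeasure d {extSeq n v i}) n]
    exact Finset.prod_congr rfl fun i _ => by rw [extSeq_lt v i.isLt, Fin.eta]
  · rw [if_neg h, Set.indicator_of_notMem
      (show v ∉ {v : Fin n → Fin d → ℤ | extSeq n v ∈ A} from h), measure_empty]

/-- Concatenation of finite tuples as an equivalence. -/
def appendEquiv (n m : ℕ) :
    ((Fin n → Fin d → ℤ) × (Fin m → Fin d → ℤ)) ≃ (Fin (n + m) → Fin d → ℤ) where
  toFun p := fun j => if h : (j : ℕ) < n then p.1 ⟨j, h⟩ else p.2 ⟨(j : ℕ) - n, by omega⟩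
  invFun w := (fun i => w ⟨i, by omega⟩, fun i => w ⟨n + i, by omega⟩)
  left_inv p := by
    refine Prod.ext ?_ ?_ <;> funext i
    · exact dif_pos i.isLt
    · refine (dif_neg (by omega : ¬ ((n + (i : ℕ)) < n))).trans ?_
      refine congrArg p.2 (Fin.ext ?_)
      show n + (i : ℕ) - n = (i : ℕ)
      omega
  right_inv w := by
    funext j
    by_cases h : (j : ℕ) < n
    · exact (dif_pos h).trans (congrArg w (Fin.ext rfl))
    · refine (dif_neg h).trans (congrArg w (Fin.ext ?_))
      show n + ((j : ℕ) - n) = (j : ℕ)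
      omega

lemma P_fact (hP : IsStepProduct d P) {A B : Set (ℕ → Fin d → ℤ)} {n m : ℕ}
    (hA : DetBy A n) (hB : DetBy B m) :
    P (A ∩ shiftSeq n ⁻¹' B) = P A * P B := by
  classical
  have hC : DetBy (A ∩ shiftSeq n ⁻¹' B) (n + m) := by
    intro ω ω' h hω
    constructor
    · exact hA ω ω' (fun i hi => h i (by omega)) hω.1
    · refine hB (shiftSeq n ω) (shiftSeq n ω') (fun i hi => h (n + i) (by omega)) hω.2
  rw [P_det hP hA, P_det hP hB, P_det hP hC,
    ← Equiv.tsum_eq (appendEquiv (d := d) n m)]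
  have key : ∀ p : (Fin n → Fin d → ℤ) × (Fin m → Fin d → ℤ),
      Set.indicator {w : Fin (n + m) → Fin d → ℤ | extSeq (n + m) w ∈ A ∩ shiftSeq n ⁻¹' B}
        (fun w => ∏ i : Fin (n + m), stepMeasure d {w i}) (appendEquiv n m p)
      = (Set.indicator {v : Fin n → Fin d → ℤ | extSeq n v ∈ A}
          (fun v => ∏ i : Fin n, stepMeasure d {v i}) p.1) *
        (Set.indicator {u : Fin m → Fin d → ℤ | extSeq m u ∈ B}
          (fun u => ∏ i : Fin m, stepMeasure d {u i}) p.2) := by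
    rintro ⟨v, u⟩
    set w : Fin (n + m) → Fin d → ℤ := appendEquiv n m (v, u) with hw
    have hwv : ∀ (i : ℕ) (h : i < n), w ⟨i, by omega⟩ = v ⟨i, h⟩ := fun i h => dif_pos h
    have hwu : ∀ (i : ℕ) (h : i < m), w ⟨n + i, by omega⟩ = u ⟨i, h⟩ := by
      intro i h
      refine (dif_neg (by omega : ¬ ((n + i) < n))).trans ?_
      refine congrArg u (Fin.ext ?_)
      show n + i - n = i
      omega
    have hmemA : extSeq (n + m) w ∈ A ↔ extSeq n v ∈ A := by
      constructor
      · refine fun h => hA _ _ (fun i hi => ?_) h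
        rw [extSeq_lt w (by omega : i < n + m), extSeq_lt v hi, hwv i hi]
      · refine fun h => hA _ _ (fun i hi => ?_) h
        rw [extSeq_lt w (by omega : i < n + m), extSeq_lt v hi, hwv i hi]
    have hshift : shiftSeq n (extSeq (n + m) w) = extSeq m u := by
      funext i
      simp only [shiftSeq, extSeq]
      by_cases h : i < m
      · rw [dif_pos (by omega : n + i < n + m), dif_pos h]
        exact hwu i h
      · rw [dif_neg (by omega), dif_neg h]
    have hmem : (extSeq (n + m) w ∈ A ∩ shiftSeq n ⁻¹' B) ↔
        (extSeq n v ∈ A ∧ extSeq m u ∈ B) := by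
      rw [Set.mem_inter_iff, Set.mem_preimage, hshift, hmemA]
    have hprod : (∏ i : Fin (n + m), stepMeasure d {w i})
        = (∏ i : Fin n, stepMeasure d {v i}) * ∏ i : Fin m, stepMeasure d {u i} := by
      rw [Fin.prod_univ_add (fun i : Fin (n + m) => stepMeasure d {w i})]
      congr 1
      · exact Finset.prod_congr rfl fun i _ =>
          congrArg (fun z => stepMeasure d {z}) (hwv (i : ℕ) i.isLt)
      · exact Finset.prod_congr rfl fun i _ =>
          congrArg (fun z => stepMeasure d {z}) (hwu (i : ℕ) i.isLt)
    by_cases h1 : extSeq n v ∈ A <;> by_cases h2 : extSeq m u ∈ B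
    · rw [Set.indicator_of_mem (show appendEquiv n m (v, u) ∈ _ from hmem.mpr ⟨h1, h2⟩),
        Set.indicator_of_mem (show v ∈ _ from h1), Set.indicator_of_mem (show u ∈ _ from h2)]
      exact hprod
    · rw [Set.indicator_of_notMem (show appendEquiv n m (v, u) ∉ _ from
          fun h => h2 (hmem.mp h).2),
        Set.indicator_of_notMem (show u ∉ _ from h2), mul_zero]
    · rw [Set.indicator_of_notMem (show appendEquiv n m (v, u) ∉ _ from
          fun h => h1 (hmem.mp h).1),
        Set.indicator_of_notMem (show v ∉ _ from h1), zero_mul]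
    · rw [Set.indicator_of_notMem (show appendEquiv n m (v, u) ∉ _ from
          fun h => h1 (hmem.mp h).1),
        Set.indicator_of_notMem (show v ∉ _ from h1), zero_mul]
  refine (tsum_congr key).trans ?_
  refine (ENNReal.tsum_prod (f := fun v u =>
    (Set.indicator {v : Fin n → Fin d → ℤ | extSeq n v ∈ A}
      (fun v => ∏ i : Fin n, stepMeasure d {v i}) v) *
    (Set.indicator {u : Fin m → Fin d → ℤ | extSeq m u ∈ B}
      (fun u => ∏ i : Fin m, stepMeasure d {u i}) u))).trans ?_
  exact (tsum_congr (fun v => ENNReal.tsum_mul_left)).trans ENNReal.tsum_mul_right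

end SRW

namespace SRW

open scoped Classical

variable {d : ℕ} {P : Measure (ℕ → Fin d → ℤ)}

lemma walk_zero' (ω : ℕ → Fin d → ℤ) : walk d 0 ω = 0 := by
  simp [walk]

lemma measurable_shiftSeq (k : ℕ) : Measurable (shiftSeq (d := d) k) :=
  measurable_pi_lambda _ (fun i => measurable_pi_apply (k + i))

lemma P_walk_one (hP : IsStepProduct d P) (w : Fin d → ℤ) :
    P {ω | walk d 1 ω = w} = stepMeasure d {w} := by
  have hset : {ω : ℕ → Fin d → ℤ | walk d 1 ω = w}
      = {ω | ∀ i < 1, ω i = (fun _ => w) i} := by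
    ext ω
    simp only [Set.mem_setOf_eq, walk, Finset.sum_range_one, Nat.lt_one_iff]
    constructor
    · rintro h i rfl; exact h
    · intro h; exact h 0 rfl
  rw [hset, P_cylN hP, Finset.prod_range_one]

lemma P_walk (hP : IsStepProduct d P) (hd : 1 ≤ d) (n : ℕ) (x : Fin d → ℤ) :
    P {ω | walk d n ω = x} = Qe d n 0 x := by
  haveI := hP.1
  induction n generalizing x with
  | zero =>
    by_cases h : (0 : Fin d → ℤ) = x
    · have hset : {ω : ℕ → Fin d → ℤ | walk d 0 ω = x} = Set.univ := by
        ext ω; simp [walk_zero', ← h]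
      rw [hset, measure_univ, Qe_zero, if_pos h]
    · have hset : {ω : ℕ → Fin d → ℤ | walk d 0 ω = x} = ∅ := by
        ext ω
        simp only [Set.mem_setOf_eq, walk_zero', Set.mem_empty_iff_false, iff_false]
        exact h
      rw [hset, measure_empty, Qe_zero, if_neg h]
  | succ n ih =>
    have hset : {ω : ℕ → Fin d → ℤ | walk d (n+1) ω = x}
        = ⋃ w : Fin d → ℤ,
          ({ω | walk d n ω = x - w} ∩ shiftSeq n ⁻¹' {ω | walk d 1 ω = w}) := by
      ext ω
      simp only [Set.mem_setOf_eq, Set.mem_iUnion, Set.mem_inter_iff, Set.mem_preimage]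
      constructor
      · intro h
        refine ⟨walk d 1 (shiftSeq n ω), ?_, rfl⟩
        have h2 := walk_add n 1 ω
        exact eq_sub_of_add_eq (h2.symm.trans h)
      · rintro ⟨w, h1, h2⟩
        have h3 := walk_add n 1 ω
        rw [h1, h2] at h3
        rw [h3, sub_add_cancel]
    have hdisj : Pairwise (Function.onFun Disjoint (fun w : Fin d → ℤ =>
        {ω : ℕ → Fin d → ℤ | walk d n ω = x - w}
          ∩ shiftSeq n ⁻¹' {ω | walk d 1 ω = w})) := by
      intro w w' hww'
      refine Set.disjoint_left.mpr fun {ω} h1 h2 => hww' ?_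
      have e1 : walk d 1 (shiftSeq n ω) = w := h1.2
      have e2 : walk d 1 (shiftSeq n ω) = w' := h2.2
      rw [← e1, ← e2]
    have hmeas : ∀ w : Fin d → ℤ, MeasurableSet
        ({ω : ℕ → Fin d → ℤ | walk d n ω = x - w}
          ∩ shiftSeq n ⁻¹' {ω | walk d 1 ω = w}) :=
      fun w => (measurableSet_walkEq n (x - w)).inter
        ((measurable_shiftSeq n) (measurableSet_walkEq 1 w))
    rw [hset, measure_iUnion hdisj hmeas]
    have hterm : ∀ w : Fin d → ℤ,
        P ({ω : ℕ → Fin d → ℤ | walk d n ω = x - w}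
          ∩ shiftSeq n ⁻¹' {ω | walk d 1 ω = w})
        = Qe d n 0 (x - w) * Qe d 1 0 w := by
      intro w
      rw [P_fact hP (detBy_walkEq n (x - w)) (detBy_walkEq 1 w), ih, P_walk_one hP,
        step_singleton hd]
    rw [tsum_congr hterm]
    have hsub : ∀ w : Fin d → ℤ, Qe d n 0 (x - w) * Qe d 1 0 w
        = (fun z => Qe d n 0 z * Qe d 1 0 (x - z)) (Equiv.subLeft x w) := by
      intro w
      simp only [Equiv.subLeft_apply]
      congr 2
      abel
    rw [tsum_congr hsub, Equiv.tsum_eq (Equiv.subLeft x) (fun z => Qe d n 0 z * Qe d 1 0 (x - z))]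
    have : ∀ z : Fin d → ℤ, Qe d n 0 z * Qe d 1 0 (x - z) = Qe d n 0 z * Qe d 1 z x := by
      intro z; rw [← Qe_translate 1 z x]
    rw [tsum_congr this, Qe_ck hd n 1]

/-- First hitting of `x` exactly at time `k`. -/
def hitAt (d : ℕ) (x : Fin d → ℤ) (k : ℕ) : Set (ℕ → Fin d → ℤ) :=
  {ω | walk d k ω = x ∧ ∀ j < k, walk d j ω ≠ x}

lemma measurableSet_hitAt (x : Fin d → ℤ) (k : ℕ) : MeasurableSet (hitAt d x k) := by
  have : hitAt d x k = {ω | walk d k ω = x} ∩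
      ⋂ (j : ℕ) (_ : j < k), {ω : ℕ → Fin d → ℤ | walk d j ω = x}ᶜ := by
    ext ω; simp [hitAt]
  rw [this]
  exact (measurableSet_walkEq k x).inter
    (MeasurableSet.iInter fun j => MeasurableSet.iInter fun _ =>
      (measurableSet_walkEq j x).compl)

lemma detBy_hitAt (x : Fin d → ℤ) (k : ℕ) : DetBy (hitAt d x k) k := by
  intro ω ω' h hω
  refine ⟨by rw [← walk_congr h]; exact hω.1, fun j hj => ?_⟩
  rw [← walk_congr (fun i hi => h i (by omega))]
  exact hω.2 j hj

lemma hitAt_pairwise (x : Fin d → ℤ) {S : ℕ → Set (ℕ → Fin d → ℤ)}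
    (hS : ∀ k, S k ⊆ hitAt d x k) :
    Pairwise (Function.onFun Disjoint S) := by
  intro k k' hne
  refine Set.disjoint_left.mpr fun {ω} h1 h2 => ?_
  obtain ⟨ha1, ha2⟩ := hS k h1
  obtain ⟨hb1, hb2⟩ := hS k' h2
  rcases lt_or_gt_of_ne hne with h | h
  · exact hb2 k h ha1
  · exact ha2 k' h hb1

lemma Qe_first_hit (hP : IsStepProduct d P) (hd : 1 ≤ d) (n : ℕ) (x : Fin d → ℤ) :
    Qe d n 0 x = ∑ k ∈ Finset.range (n+1), P (hitAt d x k) * Qe d (n - k) 0 0 := by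
  have hset : {ω : ℕ → Fin d → ℤ | walk d n ω = x}
      = ⋃ k ∈ Finset.range (n+1),
        (hitAt d x k ∩ shiftSeq k ⁻¹' {ω | walk d (n - k) ω = 0}) := by
    ext ω
    simp only [Set.mem_setOf_eq, Set.mem_iUnion, Set.mem_inter_iff, Set.mem_preimage,
      Finset.mem_range]
    constructor
    · intro h
      have hex : ∃ j, walk d j ω = x := ⟨n, h⟩
      have hk_le : Nat.find hex ≤ n := Nat.find_min' hex h
      refine ⟨Nat.find hex, by omega, ⟨Nat.find_spec hex, fun j hj => Nat.find_min hex hj⟩, ?_⟩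
      have h2 := walk_add (Nat.find hex) (n - Nat.find hex) ω
      rw [Nat.add_sub_cancel' hk_le, h, Nat.find_spec hex] at h2
      exact (left_eq_add.mp h2)
    · rintro ⟨k, hk, ⟨hk1, _⟩, hk2⟩
      have h2 := walk_add k (n - k) ω
      rw [Nat.add_sub_cancel' (by omega : k ≤ n), hk1, hk2, add_zero] at h2
      exact h2
  rw [← P_walk hP hd n x, hset, measure_biUnion_finset ?_ ?_]
  · refine Finset.sum_congr rfl fun k hk => ?_
    rw [P_fact hP (detBy_hitAt x k) (detBy_walkEq (n - k) 0), P_walk hP hd]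
  · intro k _ k' _ hne
    exact hitAt_pairwise x (S := fun k => hitAt d x k ∩ shiftSeq k ⁻¹' {ω | walk d (n-k) ω = 0})
      (fun k => Set.inter_subset_left) hne
  · exact fun k _ => (measurableSet_hitAt x k).inter
      ((measurable_shiftSeq k) (measurableSet_walkEq (n - k) 0))

lemma hitProb_eq_tsum (hP : IsStepProduct d P) (x : Fin d → ℤ) :
    hitProb d P x = ∑' k : ℕ, P (hitAt d x k) := by
  have hset : {ω : ℕ → Fin d → ℤ | ∃ n, walk d n ω = x} = ⋃ k : ℕ, hitAt d x k := by
    ext ω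
    simp only [Set.mem_setOf_eq, Set.mem_iUnion]
    constructor
    · intro hex
      exact ⟨Nat.find hex, Nat.find_spec hex, fun j hj => Nat.find_min hex hj⟩
    · rintro ⟨k, hk1, _⟩; exact ⟨k, hk1⟩
  rw [hitProb, hset, measure_iUnion (hitAt_pairwise x (fun k => subset_rfl))
    (fun k => measurableSet_hitAt x k)]

/-- First return to the origin exactly at time `k`. -/
def retAt (d : ℕ) (k : ℕ) : Set (ℕ → Fin d → ℤ) :=
  {ω | walk d k ω = 0 ∧ ∀ j, 1 ≤ j → j < k → walk d j ω ≠ 0}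

lemma measurableSet_retAt (k : ℕ) : MeasurableSet (retAt d k) := by
  have : retAt d k = {ω | walk d k ω = 0} ∩
      ⋂ (j : ℕ) (_ : 1 ≤ j) (_ : j < k), {ω : ℕ → Fin d → ℤ | walk d j ω = 0}ᶜ := by
    ext ω; simp [retAt]
  rw [this]
  exact (measurableSet_walkEq k 0).inter
    (MeasurableSet.iInter fun j => MeasurableSet.iInter fun _ =>
      MeasurableSet.iInter fun _ => (measurableSet_walkEq j 0).compl)

lemma detBy_retAt (k : ℕ) : DetBy (retAt d k) k := by
  intro ω ω' h hω
  refine ⟨by rw [← walk_congr h]; exact hω.1, fun j hj1 hj2 => ?_⟩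
  rw [← walk_congr (fun i hi => h i (by omega))]
  exact hω.2 j hj1 hj2

lemma retAt_pairwise {S : ℕ → Set (ℕ → Fin d → ℤ)}
    (hS : ∀ k, S k ⊆ retAt d (k+1)) :
    Pairwise (Function.onFun Disjoint S) := by
  intro k k' hne
  refine Set.disjoint_left.mpr fun {ω} h1 h2 => ?_
  obtain ⟨ha1, ha2⟩ := hS k h1
  obtain ⟨hb1, hb2⟩ := hS k' h2
  rcases lt_or_gt_of_ne hne with h | h
  · exact hb2 (k+1) (by omega) (by omega) ha1
  · exact ha2 (k'+1) (by omega) (by omega) hb1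

lemma Qe_first_return (hP : IsStepProduct d P) (hd : 1 ≤ d) (n : ℕ) :
    Qe d (n+1) 0 0
      = ∑ k ∈ Finset.range (n+1), P (retAt d (k+1)) * Qe d (n - k) 0 0 := by
  have hset : {ω : ℕ → Fin d → ℤ | walk d (n+1) ω = 0}
      = ⋃ k ∈ Finset.range (n+1),
        (retAt d (k+1) ∩ shiftSeq (k+1) ⁻¹' {ω | walk d (n - k) ω = 0}) := by
    ext ω
    simp only [Set.mem_setOf_eq, Set.mem_iUnion, Set.mem_inter_iff, Set.mem_preimage,
      Finset.mem_range]
    constructor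
    · intro h
      have hex : ∃ j, 1 ≤ j ∧ walk d j ω = 0 := ⟨n+1, by omega, h⟩
      obtain ⟨hm1, hm2⟩ := Nat.find_spec hex
      have hm_le : Nat.find hex ≤ n + 1 := Nat.find_min' hex ⟨by omega, h⟩
      obtain ⟨k, hk⟩ : ∃ k, Nat.find hex = k + 1 := ⟨Nat.find hex - 1, by omega⟩
      refine ⟨k, by omega, ⟨by rw [← hk]; exact hm2, fun j hj1 hj2 => fun hj0 =>
        Nat.find_min hex (by omega) ⟨hj1, hj0⟩⟩, ?_⟩
      have hk1' : walk d (k+1) ω = 0 := by rw [← hk]; exact hm2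
      have h2 := walk_add (k+1) (n - k) ω
      rw [show (k+1) + (n - k) = n + 1 by omega, h, hk1', zero_add] at h2
      exact h2.symm
    · rintro ⟨k, hk, ⟨hk1, _⟩, hk2⟩
      have h2 := walk_add (k+1) (n - k) ω
      rw [show (k+1) + (n - k) = n + 1 by omega, hk1, hk2, add_zero] at h2
      exact h2
  rw [← P_walk hP hd (n+1) 0, hset, measure_biUnion_finset ?_ ?_]
  · refine Finset.sum_congr rfl fun k hk => ?_
    rw [P_fact hP (detBy_retAt (k+1)) (detBy_walkEq (n - k) 0), P_walk hP hd]
  · intro k _ k' _ hne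
    exact retAt_pairwise
      (S := fun k => retAt d (k+1) ∩ shiftSeq (k+1) ⁻¹' {ω | walk d (n-k) ω = 0})
      (fun k => Set.inter_subset_left) hne
  · exact fun k _ => (measurableSet_retAt (k+1)).inter
      ((measurable_shiftSeq (k+1)) (measurableSet_walkEq (n - k) 0))

lemma returnProb_eq_tsum (hP : IsStepProduct d P) :
    P {ω | ∃ n, 1 ≤ n ∧ walk d n ω = 0} = ∑' k : ℕ, P (retAt d (k+1)) := by
  have hset : {ω : ℕ → Fin d → ℤ | ∃ n, 1 ≤ n ∧ walk d n ω = 0}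
      = ⋃ k : ℕ, retAt d (k+1) := by
    ext ω
    simp only [Set.mem_setOf_eq, Set.mem_iUnion]
    constructor
    · intro hex
      obtain ⟨hm1, hm2⟩ := Nat.find_spec hex
      obtain ⟨k, hk⟩ : ∃ k, Nat.find hex = k + 1 := ⟨Nat.find hex - 1, by omega⟩
      exact ⟨k, by rw [← hk]; exact hm2, fun j hj1 hj2 => fun hj0 =>
        Nat.find_min hex (by omega) ⟨hj1, hj0⟩⟩
    · rintro ⟨k, hk1, _⟩; exact ⟨k+1, by omega, hk1⟩
  rw [hset, measure_iUnion (retAt_pairwise (fun k => subset_rfl))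
    (fun k => measurableSet_retAt (k+1))]

lemma last_exit_bound (hP : IsStepProduct d P) (hd : 1 ≤ d) (N : ℕ) :
    escapeProb d P * ∑ k ∈ Finset.range N, Qe d k 0 0 ≤ 1 := by
  haveI := hP.1
  rcases Nat.eq_zero_or_pos N with hN | hN
  · subst hN; simp
  set B : ℕ → Set (ℕ → Fin d → ℤ) :=
    fun k => {ω | ∀ j, 1 ≤ j → j < N - k → walk d j ω ≠ 0} with hB
  have hdetB : ∀ k, DetBy (B k) (N - k) := by
    intro k ω ω' h hω j hj1 hj2
    rw [← walk_congr (fun i hi => h i (by omega))]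
    exact hω j hj1 hj2
  have huniv : (Set.univ : Set (ℕ → Fin d → ℤ))
      = ⋃ k ∈ Finset.range N, ({ω | walk d k ω = 0} ∩ shiftSeq k ⁻¹' B k) := by
    ext ω
    simp only [Set.mem_univ, true_iff, Set.mem_iUnion, Set.mem_inter_iff, Set.mem_preimage,
      Finset.mem_range]
    set Q : ℕ → Prop := fun j => walk d j ω = 0 with hQ
    have hk0 : Q (Nat.findGreatest Q (N-1)) :=
      Nat.findGreatest_spec (Nat.zero_le _) (walk_zero' ω)
    have hkle : Nat.findGreatest Q (N-1) ≤ N - 1 := Nat.findGreatest_le _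
    refine ⟨Nat.findGreatest Q (N-1), by omega, hk0, ?_⟩
    simp only [hB, Set.mem_setOf_eq]
    intro j hj1 hj2 hj0
    have hgt : Nat.findGreatest Q (N-1) < Nat.findGreatest Q (N-1) + j := by omega
    have hle : Nat.findGreatest Q (N-1) + j ≤ N - 1 := by omega
    refine Nat.findGreatest_is_greatest hgt hle ?_
    show walk d (Nat.findGreatest Q (N-1) + j) ω = 0
    rw [walk_add, show walk d (Nat.findGreatest Q (N-1)) ω = 0 from hk0, hj0, add_zero]
  have hBmeas : ∀ k, MeasurableSet (B k) := by
    intro k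
    have : B k = ⋂ (j : ℕ) (_ : 1 ≤ j) (_ : j < N - k),
        {ω : ℕ → Fin d → ℤ | walk d j ω = 0}ᶜ := by
      ext ω; simp [hB]
    rw [this]
    exact MeasurableSet.iInter fun j => MeasurableSet.iInter fun _ =>
      MeasurableSet.iInter fun _ => (measurableSet_walkEq j 0).compl
  have hdisj : (↑(Finset.range N) : Set ℕ).PairwiseDisjoint
      (fun k => {ω : ℕ → Fin d → ℤ | walk d k ω = 0} ∩ shiftSeq k ⁻¹' B k) := by
    intro k hk k' hk' hne
    rw [Finset.mem_coe, Finset.mem_range] at hk hk'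
    have main : ∀ k k', k < k' → k' < N → Disjoint
        ({ω : ℕ → Fin d → ℤ | walk d k ω = 0} ∩ shiftSeq k ⁻¹' B k)
        ({ω : ℕ → Fin d → ℤ | walk d k' ω = 0} ∩ shiftSeq k' ⁻¹' B k') := by
      intro k k' hlt hN'
      refine Set.disjoint_left.mpr fun {ω} h1 h2 => ?_
      have hj := h1.2 (k' - k) (by omega) (by omega)
      apply hj
      have h3 := walk_add k (k' - k) ω
      rw [show k + (k' - k) = k' by omega, h1.1, zero_add] at h3
      rw [← h3]
      exact h2.1
    rcases lt_or_gt_of_ne hne with h | h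
    · exact main k k' h hk'
    · exact (main k' k h hk).symm
  have hmeas : ∀ k ∈ Finset.range N, MeasurableSet
      ({ω : ℕ → Fin d → ℤ | walk d k ω = 0} ∩ shiftSeq k ⁻¹' B k) :=
    fun k _ => (measurableSet_walkEq k 0).inter ((measurable_shiftSeq k) (hBmeas k))
  have hone : (1:ℝ≥0∞) = ∑ k ∈ Finset.range N,
      P ({ω : ℕ → Fin d → ℤ | walk d k ω = 0} ∩ shiftSeq k ⁻¹' B k) := by
    rw [← measure_biUnion_finset hdisj hmeas, ← huniv, measure_univ]
  calc escapeProb d P * ∑ k ∈ Finset.range N, Qe d k 0 0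
      = ∑ k ∈ Finset.range N, Qe d k 0 0 * escapeProb d P := by
        rw [Finset.mul_sum]
        exact Finset.sum_congr rfl fun k _ => mul_comm _ _
    _ ≤ ∑ k ∈ Finset.range N, P ({ω : ℕ → Fin d → ℤ | walk d k ω = 0}
          ∩ shiftSeq k ⁻¹' B k) := by
        refine Finset.sum_le_sum fun k _ => ?_
        rw [P_fact hP (detBy_walkEq k 0) (hdetB k), P_walk hP hd]
        refine mul_le_mul_right ?_ _
        refine measure_mono fun ω hω => ?_
        intro j hj1 hj2
        exact hω j hj1
    _ = 1 := hone.symm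

end SRW

namespace SRW

open scoped Classical

variable {d : ℕ} {P : Measure (ℕ → Fin d → ℤ)}

lemma tsum_cauchy (a b : ℕ → ℝ≥0∞) :
    (∑' n : ℕ, ∑ k ∈ Finset.range (n+1), a k * b (n - k))
      = (∑' n : ℕ, a n) * ∑' n : ℕ, b n := by
  calc (∑' n : ℕ, ∑ k ∈ Finset.range (n+1), a k * b (n - k))
      = ∑' N : ℕ, ∑ kl ∈ Finset.HasAntidiagonal.antidiagonal N, a kl.1 * b kl.2 :=
        tsum_congr fun N =>
          (Finset.Nat.sum_antidiagonal_eq_sum_range_succ (fun k l => a k * b l) N).symm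
    _ = ∑' m : ℕ, ∑' l : ℕ, a m * b l := (tsum_antidiag (fun m l => a m * b l)).symm
    _ = (∑' n : ℕ, a n) * ∑' n : ℕ, b n :=
        (tsum_congr fun m => ENNReal.tsum_mul_left).trans ENNReal.tsum_mul_right

lemma Ge_eq_hitProb_mul (hP : IsStepProduct d P) (hd : 1 ≤ d) (x : Fin d → ℤ) :
    Ge d x = hitProb d P x * Ge d 0 := by
  calc Ge d x = ∑' n : ℕ, ∑ k ∈ Finset.range (n+1), P (hitAt d x k) * Qe d (n-k) 0 0 :=
        tsum_congr fun n => Qe_first_hit hP hd n x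
    _ = (∑' k : ℕ, P (hitAt d x k)) * ∑' n : ℕ, Qe d n 0 0 :=
        tsum_cauchy (fun k => P (hitAt d x k)) (fun m => Qe d m 0 0)
    _ = hitProb d P x * Ge d 0 := by rw [hitProb_eq_tsum hP]; rfl

lemma Ge_zero_eq (hP : IsStepProduct d P) (hd : 1 ≤ d) :
    Ge d 0 = 1 + P {ω | ∃ n, 1 ≤ n ∧ walk d n ω = 0} * Ge d 0 := by
  calc Ge d 0 = ∑' n : ℕ, Qe d n 0 0 := rfl
    _ = Qe d 0 0 0 + ∑' n : ℕ, Qe d (n+1) 0 0 := tsum_eq_zero_add' ENNReal.summable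
    _ = 1 + ∑' n : ℕ, ∑ k ∈ Finset.range (n+1), P (retAt d (k+1)) * Qe d (n-k) 0 0 := by
        rw [Qe_zero, if_pos rfl]
        congr 1
        exact tsum_congr fun n => Qe_first_return hP hd n
    _ = 1 + (∑' k : ℕ, P (retAt d (k+1))) * ∑' n : ℕ, Qe d n 0 0 :=
        congrArg (1 + ·) (tsum_cauchy (fun k => P (retAt d (k+1))) (fun m => Qe d m 0 0))
    _ = 1 + P {ω | ∃ n, 1 ≤ n ∧ walk d n ω = 0} * Ge d 0 := by
        rw [returnProb_eq_tsum hP]; rfl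

lemma escape_compl (hP : IsStepProduct d P) :
    escapeProb d P + P {ω | ∃ n, 1 ≤ n ∧ walk d n ω = 0} = 1 := by
  haveI := hP.1
  have hmeas : MeasurableSet {ω : ℕ → Fin d → ℤ | ∃ n, 1 ≤ n ∧ walk d n ω = 0} := by
    have : {ω : ℕ → Fin d → ℤ | ∃ n, 1 ≤ n ∧ walk d n ω = 0}
        = ⋃ (n : ℕ) (_ : 1 ≤ n), {ω | walk d n ω = 0} := by
      ext ω; simp
    rw [this]
    exact MeasurableSet.iUnion fun n => MeasurableSet.iUnion fun _ => measurableSet_walkEq n 0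
  have hset : {ω : ℕ → Fin d → ℤ | ∀ n, 1 ≤ n → walk d n ω ≠ 0}
      = {ω : ℕ → Fin d → ℤ | ∃ n, 1 ≤ n ∧ walk d n ω = 0}ᶜ := by
    ext ω; simp
  rw [escapeProb, hset, measure_compl hmeas (measure_ne_top P _), measure_univ]
  exact tsub_add_cancel_of_le prob_le_one

lemma gamma_Ge (hP : IsStepProduct d P) (hd : 1 ≤ d) (hγ : 0 < escapeProb d P) :
    escapeProb d P * Ge d 0 = 1 := by
  haveI := hP.1
  have hγF := escape_compl hP
  set γ := escapeProb d P
  set F := P {ω | ∃ n, 1 ≤ n ∧ walk d n ω = 0} with hF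
  have hFle : F ≤ 1 := by
    calc F ≤ γ + F := le_add_self
      _ = 1 := hγF
  have hGfin : Ge d 0 ≠ ∞ := by
    have hbound : Ge d 0 ≤ γ⁻¹ := by
      refine Summable.tsum_le_of_sum_le ENNReal.summable fun s => ?_
      obtain ⟨N, hN⟩ : ∃ N : ℕ, s ⊆ Finset.range N := by
        refine ⟨(s.sup id) + 1, fun i hi => Finset.mem_range.mpr ?_⟩
        have := Finset.le_sup (f := id) hi
        simp only [id_eq] at this
        omega
      calc ∑ i ∈ s, Qe d i 0 0 ≤ ∑ i ∈ Finset.range N, Qe d i 0 0 :=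
            Finset.sum_le_sum_of_subset hN
        _ ≤ γ⁻¹ := by
            rw [ENNReal.le_inv_iff_mul_le, mul_comm]
            exact last_exit_bound hP hd N
    exact ne_top_of_le_ne_top (ENNReal.inv_ne_top.mpr hγ.ne') hbound
  have hG : Ge d 0 = 1 + F * Ge d 0 := Ge_zero_eq hP hd
  have hFG : F * Ge d 0 ≠ ∞ :=
    ENNReal.mul_ne_top (ne_top_of_le_ne_top ENNReal.one_ne_top hFle) hGfin
  have h2 : F * Ge d 0 + γ * Ge d 0 = F * Ge d 0 + 1 := by
    calc F * Ge d 0 + γ * Ge d 0 = (γ + F) * Ge d 0 := by ring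
      _ = Ge d 0 := by rw [hγF, one_mul]
      _ = F * Ge d 0 + 1 := hG.trans (add_comm _ _)
  exact (ENNReal.add_right_inj hFG).mp h2

lemma hitProb_eq_gamma_Ge (hP : IsStepProduct d P) (hd : 1 ≤ d)
    (hγ : 0 < escapeProb d P) (x : Fin d → ℤ) :
    hitProb d P x = escapeProb d P * Ge d x := by
  have h1 : Ge d x = hitProb d P x * Ge d 0 := Ge_eq_hitProb_mul hP hd x
  calc hitProb d P x = hitProb d P x * (escapeProb d P * Ge d 0) := by
        rw [gamma_Ge hP hd hγ, mul_one]
    _ = escapeProb d P * (hitProb d P x * Ge d 0) := by ring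
    _ = escapeProb d P * Ge d x := by rw [← h1]

lemma Pe_triple (hd : 1 ≤ d) {r s u : ℝ} (hr : 0 ≤ r) (hs : 0 ≤ s) (hu : 0 ≤ u) :
    Pe d (r + s + u) 0 0 = ∑' x : Fin d → ℤ, ∑' y : Fin d → ℤ,
      Pe d r 0 x * (Pe d u 0 (y - x) * Pe d s 0 y) := by
  have e1 : r + s + u = r + (u + s) := by ring
  rw [e1, ← Pe_semigroup hd hr (add_nonneg hu hs) 0 0]
  refine tsum_congr fun x => ?_
  rw [← Pe_semigroup hd hu hs x 0, ← ENNReal.tsum_mul_left]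
  refine tsum_congr fun y => ?_
  rw [← Pe_translate u x y, ← Pe_symm s 0 y]

end SRW

open SRW in
/-- Let `d ≥ 1` with `γ_d > 0` and let `θ > 0`. Then
`∑_x ∑_y g_θ(x) g_θ(y) Φ(y−x) = γ_d ∫_0^∞ ∫_0^∞ ∫_0^∞ e^{−θ(r+s)} p_{r+s+u}(O,O) dr ds du`,
as an identity in `[0,∞]`. -/
theorem tsum_resolvent_hitProb_eq (d : ℕ) (hd : 1 ≤ d)
    (P : Measure (ℕ → (Fin d → ℤ))) (hP : IsStepProduct d P)
    (hγ : 0 < escapeProb d P) (θ : ℝ) (hθ : 0 < θ) :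
    (∑' x : Fin d → ℤ, ∑' y : Fin d → ℤ,
        srwResolvent d θ x * srwResolvent d θ y * hitProb d P (y - x))
      = escapeProb d P * ∫⁻ u in Set.Ioi (0 : ℝ), ∫⁻ s in Set.Ioi (0 : ℝ),
          ∫⁻ r in Set.Ioi (0 : ℝ),
            ENNReal.ofReal (Real.exp (-θ * (r + s)) * srwP d (r + s + u) 0 0) := by
  classical
  have hΦ : ∀ z, hitProb d P z = escapeProb d P * Ge d z :=
    hitProb_eq_gamma_Ge hP hd hγ
  have hmE : Measurable fun r : ℝ => ENNReal.ofReal (Real.exp (-θ * r)) := by fun_prop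
  have hmP : ∀ z : Fin d → ℤ, Measurable fun t : ℝ => Pe d t 0 z := fun z => measurable_Pe 0 z
  have hmEP : ∀ x : Fin d → ℤ,
      Measurable fun r : ℝ => ENNReal.ofReal (Real.exp (-θ * r)) * Pe d r 0 x :=
    fun x => hmE.mul (hmP x)
  have hexp : ∀ r s : ℝ, ENNReal.ofReal (Real.exp (-θ * (r + s)))
      = ENNReal.ofReal (Real.exp (-θ * r)) * ENNReal.ofReal (Real.exp (-θ * s)) := by
    intro r s
    rw [← ENNReal.ofReal_mul (Real.exp_nonneg _), ← Real.exp_add]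
    congr 2
    ring
  have hInner2 : ∀ u s : ℝ, 0 < u → 0 < s →
      (∫⁻ r in Set.Ioi (0:ℝ),
          ENNReal.ofReal (Real.exp (-θ * (r + s)) * srwP d (r + s + u) 0 0))
      = ∑' x : Fin d → ℤ, ∑' y : Fin d → ℤ,
          (ENNReal.ofReal (Real.exp (-θ * s)) * Pe d s 0 y) *
            (srwResolvent d θ x * Pe d u 0 (y - x)) := by
    intro u s hu hs
    have hpt : ∀ r : ℝ, r ∈ Set.Ioi (0:ℝ) →
        ENNReal.ofReal (Real.exp (-θ * (r + s)) * srwP d (r + s + u) 0 0)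
        = ∑' x : Fin d → ℤ, ∑' y : Fin d → ℤ,
            (ENNReal.ofReal (Real.exp (-θ * r)) * Pe d r 0 x) *
              ((ENNReal.ofReal (Real.exp (-θ * s)) * Pe d s 0 y) * Pe d u 0 (y - x)) := by
      intro r hr
      have hr' : (0:ℝ) < r := hr
      rw [ENNReal.ofReal_mul (Real.exp_nonneg _), ofReal_srwP _ (by positivity),
        hexp r s, Pe_triple hd hr'.le hs.le hu.le]
      rw [← ENNReal.tsum_mul_left]
      refine tsum_congr fun x => ?_
      rw [← ENNReal.tsum_mul_left]
      refine tsum_congr fun y => ?_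
      ring
    rw [setLIntegral_congr_fun measurableSet_Ioi hpt]
    rw [lintegral_tsum (fun x => (Measurable.ennreal_tsum (fun y =>
      (hmEP x).mul_const _)).aemeasurable)]
    refine tsum_congr fun x => ?_
    rw [lintegral_tsum (fun y => ((hmEP x).mul_const _).aemeasurable)]
    refine tsum_congr fun y => ?_
    rw [lintegral_mul_const _ (hmEP x), ← resolvent_eq θ x]
    ring
  have hInner : ∀ u : ℝ, u ∈ Set.Ioi (0:ℝ) →
      (∫⁻ s in Set.Ioi (0:ℝ), ∫⁻ r in Set.Ioi (0:ℝ),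
          ENNReal.ofReal (Real.exp (-θ * (r + s)) * srwP d (r + s + u) 0 0))
      = ∑' x : Fin d → ℤ, ∑' y : Fin d → ℤ,
          Pe d u 0 (y - x) * (srwResolvent d θ x * srwResolvent d θ y) := by
    intro u hu
    have hu' : (0:ℝ) < u := hu
    rw [setLIntegral_congr_fun measurableSet_Ioi
      (fun s hs => hInner2 u s hu' hs)]
    rw [lintegral_tsum (fun x => (Measurable.ennreal_tsum (fun y =>
      (hmEP y).mul_const _)).aemeasurable)]
    refine tsum_congr fun x => ?_
    rw [lintegral_tsum (fun y => ((hmEP y).mul_const _).aemeasurable)]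
    refine tsum_congr fun y => ?_
    rw [lintegral_mul_const _ (hmEP y), ← resolvent_eq θ y]
    ring
  have hI : (∫⁻ u in Set.Ioi (0:ℝ), ∫⁻ s in Set.Ioi (0:ℝ), ∫⁻ r in Set.Ioi (0:ℝ),
        ENNReal.ofReal (Real.exp (-θ * (r + s)) * srwP d (r + s + u) 0 0))
      = ∑' x : Fin d → ℤ, ∑' y : Fin d → ℤ,
          srwResolvent d θ x * srwResolvent d θ y * Ge d (y - x) := by
    rw [setLIntegral_congr_fun measurableSet_Ioi hInner]
    rw [lintegral_tsum (fun x => (Measurable.ennreal_tsum (fun y =>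
      (hmP (y - x)).mul_const _)).aemeasurable)]
    refine tsum_congr fun x => ?_
    rw [lintegral_tsum (fun y => ((hmP (y - x)).mul_const _).aemeasurable)]
    refine tsum_congr fun y => ?_
    rw [lintegral_mul_const _ (hmP (y - x)), lintegral_Pe_green (y - x)]
    ring
  calc (∑' x : Fin d → ℤ, ∑' y : Fin d → ℤ,
        srwResolvent d θ x * srwResolvent d θ y * hitProb d P (y - x))
      = ∑' x : Fin d → ℤ, ∑' y : Fin d → ℤ, escapeProb d P *
          (srwResolvent d θ x * srwResolvent d θ y * Ge d (y - x)) := by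
        refine tsum_congr fun x => tsum_congr fun y => ?_
        rw [hΦ (y - x)]
        ring
    _ = escapeProb d P * ∑' x : Fin d → ℤ, ∑' y : Fin d → ℤ,
          srwResolvent d θ x * srwResolvent d θ y * Ge d (y - x) :=
        (tsum_congr fun x => ENNReal.tsum_mul_left).trans ENNReal.tsum_mul_left
    _ = escapeProb d P * ∫⁻ u in Set.Ioi (0 : ℝ), ∫⁻ s in Set.Ioi (0 : ℝ),
          ∫⁻ r in Set.Ioi (0 : ℝ),
            ENNReal.ofReal (Real.exp (-θ * (r + s)) * srwP d (r + s + u) 0 0) := by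
        rw [hI]
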